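/- Let K ≥ 2, let S ⊆ {1,...,K} be nonempty, let E = {(i,j) : i ≠ j}, let q̃ : E → [0,1] with Σ_{(i,j)∈E} q̃(i,j) = 1, set Q̃ = Σ_{(i,j)∈E} q̃(i,j)·1{j ∈ S} and assume Q̃ > 0, and define q(i,j) = q̃(i,j)·1{j ∈ S}/Q̃. Let p be a probability vector with p(k) > 0 for k ∈ S and p(k) = 0 for k ∉ S satisfying the fixed-point equation p = Σ_{(i,j)∈E} q(i,j)·p^{i→j}, and let ℓ : {1,...,K} → [0,1]. Then the expected aggregated squared estimated loss is bounded by the number of available arms: Σ_{a∈S} p(a)·Σ_{(i,j)∈E} q̃(i,j)·ℓ̂_a(i→j)² ≤ |S|. -/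

import Mathlib

/-- The redistributed vector `p^{i→j}` moves the mass of `p` from `i` to `j`. -/
def redistribute {K : ℕ} (p : Fin K → ℝ) (i j : Fin K) (k : Fin K) : ℝ :=
  if k = i then 0 else if k = j then p i + p j else p k

/-- Importance-weighted loss estimate: `ℓ̂_a(k) = ℓ(k)·1{k = a}/p(k)` for `k ∈ S`,
and `0` for `k ∉ S`, where `a` is the realized played arm. -/
noncomputable def lhat {K : ℕ} (S : Finset (Fin K)) (p ℓ : Fin K → ℝ) (a k : Fin K) : ℝ :=
  if k ∈ S then (if k = a then ℓ k / p k else 0) else 0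

/-- Estimated expert loss of the pair `i → j`:
`ℓ̂_a(i→j) = Σ_k p^{i→j}(k)·ℓ̂_a(k)` if `j ∈ S`, and `ℓ(a)` otherwise. -/
noncomputable def estLoss {K : ℕ} (S : Finset (Fin K)) (p ℓ : Fin K → ℝ) (a i j : Fin K) : ℝ :=
  if j ∈ S then ∑ k : Fin K, redistribute p i j k * lhat S p ℓ a k else ℓ a

/-!
For an available arm `a` and `j ∈ S` the estimate is `ℓ̂_a(i→j) = p^{i→j}(a)·ℓ(a)/p(a)`, and since
`p^{i→j}(a)² ≤ p^{i→j}(a)`, the pairs with `j ∈ S` contribute at most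
`Σ q̃(i,j)·p^{i→j}(a) / p(a)² = Q̃·p(a) / p(a)²` by the fixed-point equation. The pairs with
`j ∉ S` contribute at most their weight `1 - Q̃`. So arm `a` contributes at most
`p(a)·(Q̃/p(a) + 1 - Q̃) = Q̃ + p(a)(1 - Q̃) ≤ 1` to the sum.
-/

section

variable {K : ℕ} {S : Finset (Fin K)} {p ℓ : Fin K → ℝ}

lemma redistribute_nonneg (hp : ∀ k, 0 ≤ p k) (i j k : Fin K) : 0 ≤ redistribute p i j k := by
  unfold redistribute
  split_ifs
  exacts [le_rfl, add_nonneg (hp i) (hp j), hp k]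

lemma redistribute_le_sum (hp : ∀ k, 0 ≤ p k) {i j : Fin K} (hij : i ≠ j) (k : Fin K) :
    redistribute p i j k ≤ ∑ k, p k := by
  unfold redistribute
  split_ifs
  · exact Finset.sum_nonneg fun k _ => hp k
  · rw [← Finset.sum_pair hij]
    exact Finset.sum_le_sum_of_subset_of_nonneg (Finset.subset_univ _) fun k _ _ => hp k
  · exact Finset.single_le_sum (fun k _ => hp k) (Finset.mem_univ k)

lemma estLoss_of_mem {a j : Fin K} (ha : a ∈ S) (hj : j ∈ S) (i : Fin K) :
    estLoss S p ℓ a i j = redistribute p i j a * (ℓ a / p a) := by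
  rw [estLoss, if_pos hj, Finset.sum_eq_single a (fun k _ hk => by simp [lhat, hk]) (by simp)]
  simp [lhat, ha]

lemma estLoss_of_notMem {j : Fin K} (hj : j ∉ S) (a i : Fin K) : estLoss S p ℓ a i j = ℓ a :=
  if_neg hj

lemma sq_estLoss_le_of_mem {a i j : Fin K} (ha : a ∈ S) (hj : j ∈ S)
    (hr₀ : 0 ≤ redistribute p i j a) (hr₁ : redistribute p i j a ≤ 1)
    (hℓ : 0 ≤ ℓ a ∧ ℓ a ≤ 1) :
    estLoss S p ℓ a i j ^ 2 ≤ redistribute p i j a / p a ^ 2 := by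
  rw [estLoss_of_mem ha hj, mul_pow, div_pow, ← mul_div_assoc]
  gcongr
  have hℓsq : ℓ a ^ 2 ≤ 1 := pow_le_one₀ hℓ.1 hℓ.2
  have hrsq : redistribute p i j a ^ 2 ≤ redistribute p i j a := by nlinarith
  nlinarith [sq_nonneg (redistribute p i j a)]

lemma ite_ne_mul_sq_estLoss_le {qt : Fin K → Fin K → ℝ} (hqt : ∀ i j, i ≠ j → 0 ≤ qt i j)
    (hp : ∀ k, 0 ≤ p k) (hpsum : ∑ k, p k = 1) {a : Fin K} (ha : a ∈ S)
    (hℓ : 0 ≤ ℓ a ∧ ℓ a ≤ 1) (i j : Fin K) :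
    (if i ≠ j then qt i j * estLoss S p ℓ a i j ^ 2 else 0) ≤
      (if i ≠ j ∧ j ∈ S then qt i j * redistribute p i j a else 0) / p a ^ 2 +
        (if i ≠ j ∧ j ∉ S then qt i j else 0) := by
  by_cases hij : i ≠ j
  · have hq := hqt i j hij
    by_cases hj : j ∈ S
    · have hr₁ := hpsum ▸ redistribute_le_sum hp hij a
      simp only [hij, hj, ne_eq, not_false_eq_true, and_self, not_true_eq_false, and_false,
        if_true, if_false, add_zero, mul_div_assoc]
      exact mul_le_mul_of_nonneg_left
        (sq_estLoss_le_of_mem ha hj (redistribute_nonneg hp i j a) hr₁ hℓ) hq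
    · simp only [hij, hj, ne_eq, not_false_eq_true, and_self, and_false, if_true, if_false,
        zero_div, zero_add, estLoss_of_notMem hj]
      exact mul_le_of_le_one_right hq (pow_le_one₀ hℓ.1 hℓ.2)
  · simp [hij]

lemma sum_ite_mem_mul_redistribute {qt q : Fin K → Fin K → ℝ} {Q : ℝ} (hQ : Q ≠ 0)
    (hqdef : ∀ i j, q i j = qt i j * (if j ∈ S then 1 else 0) / Q) {k : Fin K}
    (hfix : p k = ∑ i : Fin K, ∑ j : Fin K, if i ≠ j then q i j * redistribute p i j k else 0) :
    ∑ i : Fin K, ∑ j : Fin K,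
      (if i ≠ j ∧ j ∈ S then qt i j * redistribute p i j k else 0) = Q * p k := by
  rw [hfix, Finset.mul_sum]
  refine Finset.sum_congr rfl fun i _ => ?_
  rw [Finset.mul_sum]
  refine Finset.sum_congr rfl fun j _ => ?_
  by_cases hij : i ≠ j <;> by_cases hj : j ∈ S <;> simp [hij, hj, hqdef]
  field_simp

variable (S) in
lemma sum_ite_notMem_eq_sub (w : Fin K → Fin K → ℝ) :
    ∑ i : Fin K, ∑ j : Fin K, (if i ≠ j ∧ j ∉ S then w i j else 0) =
      ∑ i : Fin K, ∑ j : Fin K, (if i ≠ j then w i j else 0) -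
        ∑ i : Fin K, ∑ j : Fin K, (if i ≠ j ∧ j ∈ S then w i j else 0) := by
  simp only [← Finset.sum_sub_distrib]
  refine Finset.sum_congr rfl fun i _ => Finset.sum_congr rfl fun j _ => ?_
  by_cases hij : i ≠ j <;> by_cases hj : j ∈ S <;> simp [hij, hj]

end

theorem expected_aggregated_squared_estLoss_general
    (K : ℕ)
    (S : Finset (Fin K))
    (qt : Fin K → Fin K → ℝ)
    (hqt : ∀ i j, i ≠ j → 0 ≤ qt i j ∧ qt i j ≤ 1)
    (hqtsum : ∑ i : Fin K, ∑ j : Fin K, (if i ≠ j then qt i j else 0) = 1)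
    (Q : ℝ)
    (hQdef : Q = ∑ i : Fin K, ∑ j : Fin K, (if i ≠ j ∧ j ∈ S then qt i j else 0))
    (hQpos : 0 < Q)
    (q : Fin K → Fin K → ℝ)
    (hqdef : ∀ i j, q i j = qt i j * (if j ∈ S then 1 else 0) / Q)
    (p : Fin K → ℝ)
    (hpos : ∀ k ∈ S, 0 < p k) (hzero : ∀ k ∉ S, p k = 0)
    (hpsum : ∑ k, p k = 1)
    (hfix : ∀ k, p k = ∑ i : Fin K, ∑ j : Fin K,
      if i ≠ j then q i j * redistribute p i j k else 0)
    (ℓ : Fin K → ℝ) (hℓ : ∀ k, 0 ≤ ℓ k ∧ ℓ k ≤ 1) :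
    ∑ a ∈ S, p a * (∑ i : Fin K, ∑ j : Fin K,
        if i ≠ j then qt i j * (estLoss S p ℓ a i j) ^ 2 else 0)
      ≤ (S.card : ℝ) := by
  have hp : ∀ k, 0 ≤ p k := fun k =>
    if hk : k ∈ S then (hpos k hk).le else (hzero k hk).ge
  have hqt₀ : ∀ i j, i ≠ j → 0 ≤ qt i j := fun i j hij => (hqt i j hij).1
  have hunavailable :
      ∑ i : Fin K, ∑ j : Fin K, (if i ≠ j ∧ j ∉ S then qt i j else 0) = 1 - Q := by
    rw [sum_ite_notMem_eq_sub, hqtsum, hQdef]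
  have hQ₁ : Q ≤ 1 := sub_nonneg.1 <| hunavailable ▸ Finset.sum_nonneg fun i _ =>
    Finset.sum_nonneg fun j _ => by split_ifs with h; exacts [hqt₀ i j h.1, le_rfl]
  refine (Finset.sum_le_sum fun a ha => ?_).trans_eq (by simp : ∑ _a ∈ S, (1 : ℝ) = S.card)
  have hpa := hpos a ha
  have hpa₁ : p a ≤ 1 := hpsum ▸ Finset.single_le_sum (fun k _ => hp k) (Finset.mem_univ a)
  calc p a * (∑ i : Fin K, ∑ j : Fin K,
        if i ≠ j then qt i j * (estLoss S p ℓ a i j) ^ 2 else 0)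
      ≤ p a * ((∑ i : Fin K, ∑ j : Fin K,
          (if i ≠ j ∧ j ∈ S then qt i j * redistribute p i j a else 0)) / p a ^ 2 +
          ∑ i : Fin K, ∑ j : Fin K, (if i ≠ j ∧ j ∉ S then qt i j else 0)) := by
        simp only [Finset.sum_div, ← Finset.sum_add_distrib]
        gcongr with i _ j _
        exact ite_ne_mul_sq_estLoss_le hqt₀ hp hpsum ha (hℓ a) i j
    _ = p a * (Q * p a / p a ^ 2 + (1 - Q)) := by
        rw [sum_ite_mem_mul_redistribute hQpos.ne' hqdef (hfix a), hunavailable]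
    _ = Q + p a * (1 - Q) := by field_simp
    _ ≤ 1 := by nlinarith

/-- **The expected aggregated squared estimated loss of SI-EXP3 is bounded by the number
of available arms.** With weights `q̃` on pairs of distinct arms summing to one,
`Q̃ = Σ_{i≠j} q̃(i,j)·1{j ∈ S} > 0`, renormalized weights
`q(i,j) = q̃(i,j)·1{j ∈ S}/Q̃`, a probability vector `p` supported exactly on `S`
solving the fixed-point equation `p = Σ_{i≠j} q(i,j)·p^{i→j}`, and losses in `[0,1]`:
`Σ_{a∈S} p(a)·Σ_{i≠j} q̃(i,j)·ℓ̂_a(i→j)² ≤ |S|`. -/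
theorem expected_aggregated_squared_estLoss
    (K : ℕ) (hK : 2 ≤ K)
    (S : Finset (Fin K)) (hS : S.Nonempty)
    (qt : Fin K → Fin K → ℝ)
    (hqt : ∀ i j, i ≠ j → 0 ≤ qt i j ∧ qt i j ≤ 1)
    (hqtsum : ∑ i : Fin K, ∑ j : Fin K, (if i ≠ j then qt i j else 0) = 1)
    (Q : ℝ)
    (hQdef : Q = ∑ i : Fin K, ∑ j : Fin K, (if i ≠ j ∧ j ∈ S then qt i j else 0))
    (hQpos : 0 < Q)
    (q : Fin K → Fin K → ℝ)
    (hqdef : ∀ i j, q i j = qt i j * (if j ∈ S then 1 else 0) / Q)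
    (p : Fin K → ℝ)
    (hpos : ∀ k ∈ S, 0 < p k) (hzero : ∀ k ∉ S, p k = 0)
    (hpsum : ∑ k, p k = 1)
    (hfix : ∀ k, p k = ∑ i : Fin K, ∑ j : Fin K,
      if i ≠ j then q i j * redistribute p i j k else 0)
    (ℓ : Fin K → ℝ) (hℓ : ∀ k, 0 ≤ ℓ k ∧ ℓ k ≤ 1) :
    ∑ a ∈ S, p a * (∑ i : Fin K, ∑ j : Fin K,
        if i ≠ j then qt i j * (estLoss S p ℓ a i j) ^ 2 else 0)
      ≤ (S.card : ℝ) :=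
  expected_aggregated_squared_estLoss_general K S qt hqt hqtsum Q hQdef hQpos q hqdef p hpos hzero
    hpsum hfix ℓ hℓ
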